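/- arXiv:1610.03117 — 3 statements merged into one kernel-verified Lean document; each statement's English description precedes it below -/
import Mathlib

section
/- Let A ⊆ ℝ^d be closed and let X ⊆ ℝ^d be Lebesgue measurable and metrically associated with A. If λ_d(A_t ∩ X) is finite for some t > 0, then the function f(t) := λ_d(A_t ∩ X) is finite for every t > 0 and f has the Kneser property of order d. -/
/-! For `y ∈ X` pick a nearest point `p y ∈ closure A` with the segment from `y` to `p y` in `X`,
and contract towards it: `Ψ y = p y + λ⁻¹ • (y - p y)`. Then `dist (Ψ y) A = λ⁻¹ * dist y A`, so
`Ψ` maps `(A_{λb} \ A_{λa}) ∩ X` into `(A_b \ A_a) ∩ X`, and the nearest-point inequalities give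
`dist y y' ≤ λ * dist (Ψ y) (Ψ y')`, i.e. `Ψ` has a `λ`-Lipschitz inverse. Lipschitz maps scale
Lebesgue measure by at most `λ^d`, which is the Kneser inequality; comparing with a shell inside
`A_{t₀}` gives finiteness for all `t`. -/

open MeasureTheory Metric Set Filter
open scoped Topology ENNReal

noncomputable section

abbrev Euc (d : ℕ) := EuclideanSpace ℝ (Fin d)

def metricallyAssociated {d : ℕ} (A X : Set (Euc d)) : Prop :=
  ∀ x ∈ X, ∃ a ∈ closure A, dist x a = Metric.infDist x A ∧ openSegment ℝ x a ⊆ X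

open scoped NNReal RealInnerProductSpace
open Module AffineMap

section FootPoint

variable {E : Type*} [NormedAddCommGroup E] [InnerProductSpace ℝ E]

theorem norm_sub_add_le_norm_sub_add_smul {u v w : E} {lam : ℝ} (hu : ‖u‖ ≤ ‖u + w‖)
    (hv : ‖v‖ ≤ ‖v - w‖) (hlam : 1 ≤ lam) : ‖u - v + w‖ ≤ ‖u - v + lam • w‖ := by
  have hu' : 0 ≤ 2 * ⟪u, w⟫ + ‖w‖ ^ 2 := by
    nlinarith [norm_add_sq_real u w, norm_nonneg u]
  have hv' : 0 ≤ -2 * ⟪v, w⟫ + ‖w‖ ^ 2 := by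
    nlinarith [norm_sub_sq_real v w, norm_nonneg v]
  have hsq : ‖u - v + lam • w‖ ^ 2 - ‖u - v + w‖ ^ 2
      = (lam - 1) * (2 * ⟪u - v, w⟫ + (lam + 1) * ‖w‖ ^ 2) := by
    rw [norm_add_sq_real, norm_add_sq_real, real_inner_smul_right, norm_smul,
      Real.norm_of_nonneg (by linarith : (0:ℝ) ≤ lam)]
    ring
  -- `hu' + hv'` is the second factor in `hsq` at `lam = 1`, and that factor grows with `lam`
  refine (pow_le_pow_iff_left₀ (norm_nonneg _) (norm_nonneg _) two_ne_zero).1 ?_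
  refine sub_nonneg.1 (hsq ▸ mul_nonneg (sub_nonneg.2 hlam) ?_)
  rw [inner_sub_left]
  nlinarith [sq_nonneg ‖w‖]

def IsFootPointMap (A X : Set E) (p : E → E) : Prop :=
  ∀ y ∈ X, p y ∈ A ∧ dist y (p y) = infDist y A ∧ openSegment ℝ y (p y) ⊆ X

namespace IsFootPointMap

variable {A X : Set E} {p : E → E} {y y' : E} {c lam : ℝ}

theorem homothety_mem (hp : IsFootPointMap A X p) (hy : y ∈ X) (hc : c ∈ Ioc 0 1) :
    homothety (p y) c y ∈ X := by
  rcases hc.2.eq_or_lt with rfl | hc1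
  · simpa using hy
  · rw [homothety_eq_lineMap]
    refine (hp y hy).2.2 ?_
    rw [openSegment_symm]
    exact lineMap_mem_openSegment ℝ _ _ ⟨hc.1, hc1⟩

theorem infDist_homothety (hp : IsFootPointMap A X p) (hy : y ∈ X) (hc : c ∈ Icc 0 1) :
    infDist (homothety (p y) c y) A = c * infDist y A := by
  obtain ⟨hpA, hpy, -⟩ := hp y hy
  apply le_antisymm
  · calc infDist (homothety (p y) c y) A ≤ dist (homothety (p y) c y) (p y) :=
          infDist_le_dist_of_mem hpA
      _ = c * infDist y A := by
          rw [dist_homothety_center, dist_comm, hpy, Real.norm_of_nonneg hc.1]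
  · have h := infDist_le_infDist_add_dist (x := y) (y := homothety (p y) c y) (s := A)
    rw [dist_comm, dist_homothety_self, dist_comm, hpy,
      Real.norm_of_nonneg (by linarith [hc.2])] at h
    linarith

theorem dist_le_mul_dist_homothety (hp : IsFootPointMap A X p) (hy : y ∈ X) (hy' : y' ∈ X)
    (hlam : 1 ≤ lam) :
    dist y y' ≤ lam * dist (homothety (p y) lam⁻¹ y) (homothety (p y') lam⁻¹ y') := by
  obtain ⟨hpA, hpy, -⟩ := hp y hy
  obtain ⟨hpA', hpy', -⟩ := hp y' hy'
  have hu : ‖y - p y‖ ≤ ‖(y - p y) + (p y - p y')‖ := by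
    rw [sub_add_sub_cancel, ← dist_eq_norm, ← dist_eq_norm, hpy]
    exact infDist_le_dist_of_mem hpA'
  have hv : ‖y' - p y'‖ ≤ ‖(y' - p y') - (p y - p y')‖ := by
    rw [sub_sub_sub_cancel_right, ← dist_eq_norm, ← dist_eq_norm, hpy']
    exact infDist_le_dist_of_mem hpA
  have hlam0 : lam ≠ 0 := by positivity
  calc dist y y' = ‖(y - p y) - (y' - p y') + (p y - p y')‖ := by
        rw [dist_eq_norm]; congr 1; abel
    _ ≤ ‖(y - p y) - (y' - p y') + lam • (p y - p y')‖ :=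
        norm_sub_add_le_norm_sub_add_smul hu hv hlam
    _ = lam * dist (homothety (p y) lam⁻¹ y) (homothety (p y') lam⁻¹ y') := by
        have h : homothety (p y) lam⁻¹ y - homothety (p y') lam⁻¹ y'
            = lam⁻¹ • ((y - p y) - (y' - p y') + lam • (p y - p y')) := by
          simp only [homothety_apply, vsub_eq_sub, vadd_eq_add, smul_add, smul_sub, smul_smul,
            inv_mul_cancel₀ hlam0, one_smul]
          abel
        rw [dist_eq_norm, h, norm_smul, Real.norm_of_nonneg (by positivity),
          mul_inv_cancel_left₀ hlam0]

theorem mapsTo_homothety_shell (hp : IsFootPointMap A X p) (hlam : 1 ≤ lam) (a b : ℝ) :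
    MapsTo (fun y => homothety (p y) lam⁻¹ y)
      ((thickening (lam * b) A ∩ X) \ (thickening (lam * a) A ∩ X))
      ((thickening b A ∩ X) \ (thickening a A ∩ X)) := by
  rintro y ⟨⟨hyb, hyX⟩, hya⟩
  have hA : A.Nonempty := ⟨p y, (hp y hyX).1⟩
  have hlam0 : 0 < lam := by linarith
  have hinv : lam⁻¹ ∈ Ioc 0 1 := ⟨inv_pos.2 hlam0, inv_le_one_of_one_le₀ hlam⟩
  have hX := hp.homothety_mem hyX hinv
  simp only [Set.mem_sdiff, mem_inter_iff, mem_thickening_iff_infDist_lt hA, hyX, hX, and_true,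
    hp.infDist_homothety hyX (Ioc_subset_Icc_self hinv)] at hyb hya ⊢
  rw [inv_mul_lt_iff₀ hlam0, inv_mul_lt_iff₀ hlam0]
  exact ⟨hyb, hya⟩

end IsFootPointMap

end FootPoint

section Kneser

variable {V : Type*} [NormedAddCommGroup V] [InnerProductSpace ℝ V] [FiniteDimensional ℝ V]
  [MeasurableSpace V] [BorelSpace V] {A X : Set V} {p : V → V} {lam : ℝ}

theorem LipschitzOnWith.volume_image_le {K : ℝ≥0} {f : V → V} {s : Set V}
    (hf : LipschitzOnWith K f s) : volume (f '' s) ≤ (K : ℝ≥0∞) ^ finrank ℝ V * volume s := by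
  rw [← InnerProductSpace.euclideanHausdorffMeasure_eq_volume,
    Measure.euclideanHausdorffMeasure_def]
  simp only [Measure.smul_apply, ENNReal.smul_def, smul_eq_mul]
  rw [mul_left_comm, ← ENNReal.rpow_natCast]
  gcongr
  exact hf.hausdorffMeasure_image_le (Nat.cast_nonneg _)

theorem volume_le_of_dist_le_mul_dist {K : ℝ≥0} {f : V → V} {s : Set V}
    (hf : ∀ x ∈ s, ∀ y ∈ s, dist x y ≤ K * dist (f x) (f y)) :
    volume s ≤ (K : ℝ≥0∞) ^ finrank ℝ V * volume (f '' s) := by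
  have hinj : InjOn f s := fun x hx y hy hxy => by
    simpa [hxy] using hf x hx y hy
  have hlip : LipschitzOnWith K (Function.invFunOn f s) (f '' s) := by
    refine LipschitzOnWith.of_dist_le_mul ?_
    rintro _ ⟨x, hx, rfl⟩ _ ⟨y, hy, rfl⟩
    rw [hinj.leftInvOn_invFunOn hx, hinj.leftInvOn_invFunOn hy]
    exact hf x hx y hy
  simpa only [hinj.invFunOn_image subset_rfl] using hlip.volume_image_le

namespace IsFootPointMap

theorem volume_shell_le (hp : IsFootPointMap A X p) (hlam : 1 ≤ lam) (a b : ℝ) :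
    volume ((thickening (lam * b) A ∩ X) \ (thickening (lam * a) A ∩ X)) ≤
      ENNReal.ofReal lam ^ finrank ℝ V * volume ((thickening b A ∩ X) \ (thickening a A ∩ X)) := by
  refine (volume_le_of_dist_le_mul_dist (K := lam.toNNReal)
    (f := fun y => homothety (p y) lam⁻¹ y) ?_).trans ?_
  · intro y hy y' hy'
    rw [Real.coe_toNNReal _ (by linarith)]
    exact hp.dist_le_mul_dist_homothety hy.1.2 hy'.1.2 hlam
  · exact mul_le_mul_right (measure_mono (hp.mapsTo_homothety_shell hlam a b).image_subset) _

theorem volume_thickening_inter_ne_top (hp : IsFootPointMap A X p) {t₀ t : ℝ} (ht₀ : 0 < t₀)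
    (h₀ : volume (thickening t₀ A ∩ X) ≠ ∞) (ht : 0 < t) : volume (thickening t A ∩ X) ≠ ∞ := by
  rcases le_total t t₀ with htt | htt
  · exact measure_ne_top_of_subset (inter_subset_inter_left X (thickening_mono htt A)) h₀
  have hlam : 1 ≤ t / t₀ := (one_le_div ht₀).2 htt
  have hshell := hp.volume_shell_le hlam (t₀ / (t / t₀)) t₀
  rw [mul_div_cancel₀ _ (by positivity), div_mul_cancel₀ t ht₀.ne'] at hshell
  have hcover : thickening t A ∩ X ⊆
      (thickening t₀ A ∩ X) ∪ ((thickening t A ∩ X) \ (thickening t₀ A ∩ X)) := by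
    rw [union_sdiff_self]
    exact subset_union_right
  refine measure_ne_top_of_subset hcover (measure_union_ne_top h₀ (ne_top_of_le_ne_top ?_ hshell))
  exact ENNReal.mul_ne_top (by finiteness) (measure_ne_top_of_subset sdiff_subset h₀)

theorem measureReal_thickening_sub_le (hp : IsFootPointMap A X p) (hX : MeasurableSet X)
    (hfin : ∀ t > 0, volume (thickening t A ∩ X) ≠ ∞) (hlam : 1 ≤ lam) {a b : ℝ} (hb : 0 < b)
    (hab : a ≤ b) :
    volume.real (thickening (lam * b) A ∩ X) - volume.real (thickening (lam * a) A ∩ X) ≤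
      lam ^ finrank ℝ V *
        (volume.real (thickening b A ∩ X) - volume.real (thickening a A ∩ X)) := by
  have hlam0 : 0 < lam := by linarith
  have hmono {s t : ℝ} (hst : s ≤ t) : thickening s A ∩ X ⊆ thickening t A ∩ X :=
    inter_subset_inter_left X (thickening_mono hst A)
  have hmeas (s : ℝ) : MeasurableSet (thickening s A ∩ X) :=
    isOpen_thickening.measurableSet.inter hX
  rw [← measureReal_sdiff (hmono hab) (hmeas a) (hfin b hb),
    ← measureReal_sdiff (hmono (mul_le_mul_of_nonneg_left hab hlam0.le)) (hmeas _)
      (hfin _ (mul_pos hlam0 hb))]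
  have hshell := ENNReal.toReal_mono
    (ENNReal.mul_ne_top (by finiteness) (measure_ne_top_of_subset sdiff_subset (hfin b hb)))
    (hp.volume_shell_le hlam a b)
  rwa [ENNReal.toReal_mul, ENNReal.toReal_pow, ENNReal.toReal_ofReal hlam0.le] at hshell

end IsFootPointMap

end Kneser

theorem metricallyAssociated.exists_isFootPointMap {d : ℕ} {A X : Set (Euc d)}
    (h : metricallyAssociated A X) : ∃ p, IsFootPointMap (closure A) X p := by
  choose! p hpA hpd hps using h
  exact ⟨p, fun y hy => ⟨hpA y hy, by rw [infDist_closure]; exact hpd y hy, hps y hy⟩⟩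

theorem kneser_of_metricallyAssociated_general {d : ℕ} (A X : Set (Euc d))
    (hX : MeasurableSet X) (hma : metricallyAssociated A X)
    (hfin : ∃ t > (0:ℝ), volume (Metric.thickening t A ∩ X) ≠ ⊤) :
    (∀ t > (0:ℝ), volume (Metric.thickening t A ∩ X) ≠ ⊤) ∧
    (∀ lam : ℝ, 1 ≤ lam → ∀ a b : ℝ, 0 < a → a ≤ b →
      (volume (Metric.thickening (lam * b) A ∩ X)).toReal -
          (volume (Metric.thickening (lam * a) A ∩ X)).toReal ≤
        lam ^ d * ((volume (Metric.thickening b A ∩ X)).toReal -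
          (volume (Metric.thickening a A ∩ X)).toReal)) := by
  obtain ⟨p, hp⟩ := hma.exists_isFootPointMap
  simp_rw [← thickening_closure (s := A)] at hfin ⊢
  obtain ⟨t₀, ht₀, h₀⟩ := hfin
  have hfin' (t : ℝ) (ht : t > 0) := hp.volume_thickening_inter_ne_top ht₀ h₀ ht
  refine ⟨hfin', fun lam hlam a b ha hab => ?_⟩
  have h := hp.measureReal_thickening_sub_le hX hfin' hlam (ha.trans_le hab) hab
  rwa [finrank_euclideanSpace_fin] at h

/-- Lemma 2.4 (Stachó/Kneser): if `X` is measurable and metrically associated with the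
closed set `A` and the local parallel volume `λ_d(A_t ∩ X)` is finite for some `t > 0`,
then it is finite for all `t > 0` and `f(t) := λ_d(A_t ∩ X)` has the Kneser property
of order `d`. -/
theorem kneser_of_metricallyAssociated {d : ℕ} (A X : Set (Euc d))
    (hA : IsClosed A) (hX : MeasurableSet X) (hma : metricallyAssociated A X)
    (hfin : ∃ t > (0:ℝ), volume (Metric.thickening t A ∩ X) ≠ ⊤) :
    (∀ t > (0:ℝ), volume (Metric.thickening t A ∩ X) ≠ ⊤) ∧
    (∀ lam : ℝ, 1 ≤ lam → ∀ a b : ℝ, 0 < a → a ≤ b →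
      (volume (Metric.thickening (lam * b) A ∩ X)).toReal -
          (volume (Metric.thickening (lam * a) A ∩ X)).toReal ≤
        lam ^ d * ((volume (Metric.thickening b A ∩ X)).toReal -
          (volume (Metric.thickening a A ∩ X)).toReal)) :=
  kneser_of_metricallyAssociated_general A X hX hma hfin
end
end

section
/- Let A ⊆ ℝ^d be a nonempty closed set. Then the set family 𝓐_A := π_A^{-1}𝓑^d ∪ 𝓒_A, where 𝓒_A := {B Borel ⊆ ℝ^d : dist(A,B) > 0} and π_A^{-1}𝓑^d := {π_A^{-1}(B) : B a Borel subset of A}, is stable under pairwise intersections and generates the Borel σ-algebra of ℝ^d. -/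
open MeasureTheory Metric Set Filter
open scoped Topology ENNReal

noncomputable section

/-- `π_A^{-1}(B)`: the set of points having a unique nearest point in `A`, whose
nearest point lies in `B`. -/
def piInv {d : ℕ} (A B : Set (Euc d)) : Set (Euc d) :=
  {x | (∃! a, a ∈ A ∧ dist x a = Metric.infDist x A) ∧
       ∀ a ∈ A, dist x a = Metric.infDist x A → a ∈ B}

/-- The family `𝓒_A` of Borel sets having positive distance from `A`. -/
def distFam {d : ℕ} (A : Set (Euc d)) : Set (Set (Euc d)) :=
  {C | MeasurableSet C ∧ ∃ δ > (0:ℝ), ∀ a ∈ A, ∀ b ∈ C, δ ≤ dist a b}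

/-- The family `π_A^{-1}𝓑^d` of preimages under the metric projection of Borel subsets
of `A`. -/
def projFam {d : ℕ} (A : Set (Euc d)) : Set (Set (Euc d)) :=
  {S | ∃ B, B ⊆ A ∧ MeasurableSet B ∧ S = piInv A B}

/-- The set of points with a unique nearest point in `A`. -/
def UnpSet {d : ℕ} (A : Set (Euc d)) : Set (Euc d) :=
  {x | ∃! a, a ∈ A ∧ dist x a = Metric.infDist x A}

section aux
variable {d : ℕ} {A : Set (Euc d)}

/-- Compactness: from a sequence of nearest points to a convergent sequence of base points,
extract a convergent subsequence whose limit is a nearest point of the limit. -/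
lemma nearest_subseq (hA : IsClosed A) {x : ℕ → Euc d} {x₀ : Euc d}
    (hx : Tendsto x atTop (𝓝 x₀)) {a : ℕ → Euc d}
    (haA : ∀ k, a k ∈ A) (hnear : ∀ k, dist (x k) (a k) = infDist (x k) A) :
    ∃ φ : ℕ → ℕ, StrictMono φ ∧ ∃ a₀, Tendsto (a ∘ φ) atTop (𝓝 a₀) ∧ a₀ ∈ A ∧
      dist x₀ a₀ = infDist x₀ A := by
  have hinf : Tendsto (fun k => infDist (x k) A) atTop (𝓝 (infDist x₀ A)) :=
    ((continuous_infDist_pt A).tendsto x₀).comp hx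
  have hd0 : Tendsto (fun k => dist x₀ (x k)) atTop (𝓝 0) :=
    tendsto_iff_dist_tendsto_zero.mp hx |>.congr (fun k => dist_comm (x k) x₀)
  have hsum : Tendsto (fun k => dist x₀ (x k) + infDist (x k) A) atTop
      (𝓝 (0 + infDist x₀ A)) := hd0.add hinf
  obtain ⟨M, hM⟩ := hsum.bddAbove_range
  have hball : ∀ k, a k ∈ closedBall x₀ M := by
    intro k
    have h1 : dist x₀ (a k) ≤ dist x₀ (x k) + dist (x k) (a k) := dist_triangle _ _ _
    have h2 : dist x₀ (x k) + dist (x k) (a k) ≤ M := by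
      rw [hnear k]; exact hM (mem_range_self k)
    simpa [mem_closedBall, dist_comm] using h1.trans h2
  obtain ⟨a₀, _, φ, hφ, hta⟩ :=
    tendsto_subseq_of_bounded (isBounded_closedBall (x := x₀) (r := M)) hball
  refine ⟨φ, hφ, a₀, hta, ?_, ?_⟩
  · exact hA.mem_of_tendsto hta (Eventually.of_forall fun k => haA (φ k))
  · have h1 : Tendsto (fun k => dist (x (φ k)) (a (φ k))) atTop (𝓝 (dist x₀ a₀)) :=
      ((hx.comp hφ.tendsto_atTop).dist hta)
    have h2 : Tendsto (fun k => dist (x (φ k)) (a (φ k))) atTop (𝓝 (infDist x₀ A)) := by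
      have := hinf.comp hφ.tendsto_atTop
      exact this.congr fun k => (hnear (φ k)).symm
    exact tendsto_nhds_unique h1 h2

lemma isClosed_nearestIn (hA : IsClosed A) {C : Set (Euc d)} (hC : IsClosed C) (hCA : C ⊆ A) :
    IsClosed {x | ∃ a ∈ C, dist x a = infDist x A} := by
  refine IsSeqClosed.isClosed ?_
  intro x x₀ hxmem hx
  choose a haC hnear using hxmem
  obtain ⟨φ, hφ, a₀, hta, ha₀A, ha₀d⟩ :=
    nearest_subseq hA hx (a := a) (fun k => hCA (haC k)) hnear
  exact ⟨a₀, hC.mem_of_tendsto hta (Eventually.of_forall fun k => haC (φ k)), ha₀d⟩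

lemma isClosed_pairBad (hA : IsClosed A) (ε : ℝ) :
    IsClosed {x | ∃ a ∈ A, ∃ b ∈ A, dist x a = infDist x A ∧ dist x b = infDist x A ∧
      ε ≤ dist a b} := by
  refine IsSeqClosed.isClosed ?_
  intro x x₀ hxmem hx
  choose a haA b hbA hna hnb hab using hxmem
  obtain ⟨φ, hφ, a₀, hta, haA₀, hda₀⟩ := nearest_subseq hA hx haA hna
  obtain ⟨ψ, hψ, b₀, htb, hbA₀, hdb₀⟩ := nearest_subseq hA (hx.comp hφ.tendsto_atTop)
    (a := b ∘ φ) (fun k => hbA (φ k)) (fun k => hnb (φ k))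
  refine ⟨a₀, haA₀, b₀, hbA₀, hda₀, hdb₀, ?_⟩
  have h1 : Tendsto (fun k => dist (a (φ (ψ k))) (b (φ (ψ k)))) atTop (𝓝 (dist a₀ b₀)) :=
    (hta.comp hψ.tendsto_atTop).dist htb
  exact ge_of_tendsto h1 (Eventually.of_forall fun k => hab (φ (ψ k)))

lemma measurableSet_UnpSet (hA : IsClosed A) (hne : A.Nonempty) :
    MeasurableSet (UnpSet A) := by
  have heq : UnpSet A = (⋃ n : ℕ, {x | ∃ a ∈ A, ∃ b ∈ A, dist x a = infDist x A ∧
      dist x b = infDist x A ∧ (1:ℝ)/(n+1) ≤ dist a b})ᶜ := by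
    ext x
    simp only [UnpSet, mem_setOf_eq, mem_compl_iff, mem_iUnion, not_exists]
    constructor
    · rintro hu n a ⟨haA, b, hbA, hda, hdb, hle⟩
      have hab : a = b := (hu.unique ⟨haA, hda⟩ ⟨hbA, hdb⟩)
      rw [hab, dist_self] at hle
      have hpos : (0:ℝ) < 1/(n+1) := by positivity
      linarith
    · intro h
      obtain ⟨a, haA, hda⟩ := hA.exists_infDist_eq_dist hne x
      refine ⟨a, ⟨haA, hda.symm⟩, ?_⟩
      rintro y ⟨hyA, hdy⟩
      by_contra hne'
      have hpos : 0 < dist y a := dist_pos.mpr hne'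
      obtain ⟨n, hn⟩ := exists_nat_one_div_lt hpos
      exact h n y ⟨hyA, a, haA, hdy, hda.symm, hn.le⟩
  rw [heq]
  exact (MeasurableSet.iUnion fun n => (isClosed_pairBad hA _).measurableSet).compl

end aux

section aux2
variable {d : ℕ} {A : Set (Euc d)}

lemma piInv_subset_unp (B : Set (Euc d)) : piInv A B ⊆ UnpSet A := fun _ hx => hx.1

lemma piInv_diff (D : Set (Euc d)) : piInv A (A \ D) = UnpSet A \ piInv A D := by
  ext x
  constructor
  · rintro ⟨hu, hall⟩
    refine ⟨hu, fun hmem => ?_⟩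
    obtain ⟨a, ha, -⟩ := hu
    exact (hall a ha.1 ha.2).2 (hmem.2 a ha.1 ha.2)
  · rintro ⟨hu, hnot⟩
    refine ⟨hu, fun b hbA hbd => ⟨hbA, fun hbD => ?_⟩⟩
    refine hnot ⟨hu, fun c hcA hcd => ?_⟩
    have : c = b := (hu.unique ⟨hcA, hcd⟩ ⟨hbA, hbd⟩)
    rwa [this]

lemma piInv_iUnion (f : ℕ → Set (Euc d)) :
    piInv A (⋃ n, f n) = ⋃ n, piInv A (f n) := by
  ext x
  constructor
  · rintro ⟨hu, hall⟩
    obtain ⟨a, ha⟩ := hu.exists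
    obtain ⟨n, hn⟩ := mem_iUnion.mp (hall a ha.1 ha.2)
    refine mem_iUnion.mpr ⟨n, hu, fun b hbA hbd => ?_⟩
    have : b = a := hu.unique ⟨hbA, hbd⟩ ha
    rwa [this]
  · intro hx
    obtain ⟨n, hu, hall⟩ := mem_iUnion.mp hx
    exact ⟨hu, fun b hbA hbd => mem_iUnion.mpr ⟨n, hall b hbA hbd⟩⟩

lemma piInv_inter (B C : Set (Euc d)) :
    piInv A (B ∩ C) = piInv A B ∩ piInv A C := by
  ext x
  constructor
  · rintro ⟨hu, hall⟩
    exact ⟨⟨hu, fun a haA had => (hall a haA had).1⟩,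
           ⟨hu, fun a haA had => (hall a haA had).2⟩⟩
  · rintro ⟨⟨hu, h1⟩, ⟨-, h2⟩⟩
    exact ⟨hu, fun a haA had => ⟨h1 a haA had, h2 a haA had⟩⟩

lemma piInv_closed_eq {C : Set (Euc d)} (hCA : C ⊆ A) :
    piInv A C = UnpSet A ∩ {x | ∃ a ∈ C, dist x a = infDist x A} := by
  ext x
  constructor
  · rintro ⟨hu, hall⟩
    obtain ⟨a, ha⟩ := hu.exists
    exact ⟨hu, a, hall a ha.1 ha.2, ha.2⟩
  · rintro ⟨hu, a, haC, had⟩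
    refine ⟨hu, fun b hbA hbd => ?_⟩
    have : b = a := hu.unique ⟨hbA, hbd⟩ ⟨hCA haC, had⟩
    rwa [this]

lemma measurableSet_piInv_closed (hA : IsClosed A) (hne : A.Nonempty)
    {C : Set (Euc d)} (hC : IsClosed C) (hCA : C ⊆ A) :
    MeasurableSet (piInv A C) := by
  rw [piInv_closed_eq hCA]
  exact (measurableSet_UnpSet hA hne).inter (isClosed_nearestIn hA hC hCA).measurableSet

lemma measurableSet_piInv (hA : IsClosed A) (hne : A.Nonempty)
    {B : Set (Euc d)} (hB : MeasurableSet B) (hBA : B ⊆ A) :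
    MeasurableSet (piInv A B) := by
  have key : ∀ ⦃t : Set (Euc d)⦄, MeasurableSet t → MeasurableSet (piInv A (t ∩ A)) := by
    refine MeasurableSet.induction_on_open ?_ ?_ ?_
    · intro U hU
      have h1 : U ∩ A = A \ (A ∩ Uᶜ) := by ext y; simp only [mem_inter_iff, mem_diff, mem_compl_iff]; tauto
      rw [h1, piInv_diff]
      exact (measurableSet_UnpSet hA hne).diff
        (measurableSet_piInv_closed hA hne (hA.inter hU.isClosed_compl) inter_subset_left)
    · intro t ht hPt
      have h1 : tᶜ ∩ A = A \ (t ∩ A) := by ext y; simp only [mem_inter_iff, mem_diff, mem_compl_iff]; tauto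
      rw [h1, piInv_diff]
      exact (measurableSet_UnpSet hA hne).diff hPt
    · intro f hdisj hmeas hP
      have h1 : (⋃ i, f i) ∩ A = ⋃ i, (f i ∩ A) := by rw [iUnion_inter]
      rw [h1, piInv_iUnion]
      exact MeasurableSet.iUnion hP
  have := key hB
  rwa [inter_eq_left.mpr hBA] at this

lemma piInv_inter_self {B : Set (Euc d)} (hBA : B ⊆ A) :
    piInv A B ∩ A = B := by
  ext x
  constructor
  · rintro ⟨⟨hu, hall⟩, hxA⟩
    exact hall x hxA (by rw [dist_self, infDist_zero_of_mem hxA])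
  · intro hxB
    have hxA : x ∈ A := hBA hxB
    have hinf : infDist x A = 0 := infDist_zero_of_mem hxA
    have huniq : ∀ b, b ∈ A ∧ dist x b = infDist x A → b = x := by
      rintro b ⟨-, hbd⟩
      rw [hinf, dist_comm] at hbd
      exact dist_eq_zero.mp hbd
    refine ⟨⟨⟨x, ⟨hxA, by rw [dist_self, hinf]⟩, huniq⟩, fun b hbA hbd => ?_⟩, hxA⟩
    rw [huniq b ⟨hbA, hbd⟩]; exact hxB

end aux2

/-- Proposition 4.2: for nonempty closed `A`, the family `𝓐_A = π_A^{-1}𝓑^d ∪ 𝓒_A` is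
stable under pairwise intersections and generates the Borel σ-algebra of `ℝ^d`. -/
theorem projFam_union_distFam_generates_borel {d : ℕ} (A : Set (Euc d))
    (hA : IsClosed A) (hne : A.Nonempty) :
    (∀ S ∈ projFam A ∪ distFam A, ∀ T ∈ projFam A ∪ distFam A,
      S ∩ T ∈ projFam A ∪ distFam A) ∧
    MeasurableSpace.generateFrom (projFam A ∪ distFam A) =
      (inferInstance : MeasurableSpace (Euc d)) := by
  have hprojMeas : ∀ S ∈ projFam A, MeasurableSet S := by
    rintro S ⟨B, hBA, hB, rfl⟩
    exact measurableSet_piInv hA hne hB hBA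
  have hAmeas : MeasurableSet A := hA.measurableSet
  have hDfam : ∀ n : ℕ, {x : Euc d | (1:ℝ)/(n+1) ≤ infDist x A} ∈ distFam A := by
    intro n
    have hcl : IsClosed {x : Euc d | (1:ℝ)/(n+1) ≤ infDist x A} :=
      isClosed_le continuous_const (continuous_infDist_pt A)
    refine ⟨hcl.measurableSet, 1/(n+1), by positivity, fun a ha b hb => ?_⟩
    calc (1:ℝ)/(n+1) ≤ infDist b A := hb
      _ ≤ dist b a := infDist_le_dist_of_mem ha
      _ = dist a b := dist_comm _ _
  constructor
  · rintro S hS T hT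
    rcases hS with ⟨B, hBA, hB, rfl⟩ | ⟨hTm, δ, hδ, hdist⟩
    · rcases hT with ⟨B', hBA', hB', rfl⟩ | ⟨hTm', δ', hδ', hdist'⟩
      · exact Or.inl ⟨B ∩ B', inter_subset_left.trans hBA, hB.inter hB',
          (piInv_inter B B').symm⟩
      · exact Or.inr ⟨(measurableSet_piInv hA hne hB hBA).inter hTm',
          δ', hδ', fun a ha b hb => hdist' a ha b hb.2⟩
    · refine Or.inr ⟨hTm.inter ?_, δ, hδ, fun a ha b hb => hdist a ha b hb.1⟩
      rcases hT with ⟨B', hBA', hB', rfl⟩ | ⟨hTm', -⟩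
      · exact measurableSet_piInv hA hne hB' hBA'
      · exact hTm'
  · apply le_antisymm
    · refine MeasurableSpace.generateFrom_le ?_
      rintro S (hS | ⟨hSm, -⟩)
      · exact hprojMeas S hS
      · exact hSm
    · -- borel ≤ generated
      intro s hs
      let m := MeasurableSpace.generateFrom (projFam A ∪ distFam A)
      show MeasurableSet[m] s
      -- shells
      set D : ℕ → Set (Euc d) := fun n => {x | (1:ℝ)/(n+1) ≤ infDist x A} with hDdef
      have hDfam' : ∀ n, D n ∈ distFam A := fun n => hDfam n
      have hDm : ∀ n, MeasurableSet[m] (D n) := fun n =>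
        MeasurableSpace.measurableSet_generateFrom (Or.inr (hDfam' n))
      have hAeq : A = (⋃ n, D n)ᶜ := by
        ext x
        simp only [mem_compl_iff, mem_iUnion, not_exists, hDdef, mem_setOf_eq, not_le]
        constructor
        · intro hxA n
          rw [infDist_zero_of_mem hxA]
          positivity
        · intro h
          by_contra hxA
          have hpos : 0 < infDist x A := (hA.notMem_iff_infDist_pos hne).mp hxA
          obtain ⟨n, hn⟩ := exists_nat_one_div_lt hpos
          exact absurd (h n) (not_lt.mpr hn.le)
      have hAm : MeasurableSet[m] A := by
        rw [hAeq]; exact (MeasurableSet.iUnion hDm).compl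
      -- decompose s
      have hsA : MeasurableSet[m] (s ∩ A) := by
        have h1 : s ∩ A = piInv A (s ∩ A) ∩ A := (piInv_inter_self inter_subset_right).symm
        rw [h1]
        refine (MeasurableSpace.measurableSet_generateFrom
          (Or.inl ⟨s ∩ A, inter_subset_right, hs.inter hAmeas, rfl⟩)).inter hAm
      have hsD : ∀ n, MeasurableSet[m] (s ∩ D n) := by
        intro n
        refine MeasurableSpace.measurableSet_generateFrom (Or.inr ?_)
        obtain ⟨hm', δ, hδ, hd⟩ := hDfam' n
        exact ⟨hs.inter hm', δ, hδ, fun a ha b hb => hd a ha b hb.2⟩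
      have hdecomp : s = (s ∩ A) ∪ ⋃ n, (s ∩ D n) := by
        ext x
        simp only [mem_union, mem_inter_iff, mem_iUnion]
        constructor
        · intro hxs
          by_cases hxA : x ∈ A
          · exact Or.inl ⟨hxs, hxA⟩
          · have hpos : 0 < infDist x A := (hA.notMem_iff_infDist_pos hne).mp hxA
            obtain ⟨n, hn⟩ := exists_nat_one_div_lt hpos
            exact Or.inr ⟨n, hxs, hn.le⟩
        · rintro (⟨h, -⟩ | ⟨n, h, -⟩) <;> exact h
      rw [hdecomp]
      exact hsA.union (MeasurableSet.iUnion hsD)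
end
end

section
/- Let A, A' ⊆ ℝ^d be closed sets, B ⊆ ℝ^d an open set with A ∩ B = A' ∩ B, and s ∈ [0,d). (i) If the local Minkowski contents μ^s(A,·) and μ^s(A',·) both exist (as vague limits of μ_r^s(A,·) and μ_r^s(A',·) as r ↓ 0), then μ^s(A,C) = μ^s(A',C) for every Borel set C ⊆ B. (ii) If the local S-contents σ^s(A,·) and σ^s(A',·) both exist (as vague limits of σ_r^s(A,·) and σ_r^s(A',·) as r ↓ 0), then σ^s(A,C) = σ^s(A',C) for every Borel set C ⊆ B. -/
open MeasureTheory Metric Set Filter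
open scoped Topology ENNReal

noncomputable section

/-- `κ_t = π^{t/2} / Γ(1 + t/2)`. -/
def kappa (t : ℝ) : ℝ := Real.pi ^ (t / 2) / Real.Gamma (1 + t / 2)

/-- Vague convergence, as `r ↓ 0`, of the rescaled local parallel volumes
`μ_r^s(A,·) = λ_d(A_r ∩ ·)/(κ_{d-s} r^{d-s})` to the Radon measure `μ`. -/
def vagueLimVol {d : ℕ} (A : Set (Euc d)) (s : ℝ) (μ : Measure (Euc d)) : Prop :=
  ∀ f : Euc d → ℝ, Continuous f → HasCompactSupport f →
    Filter.Tendsto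
      (fun r : ℝ => (∫ x in Metric.thickening r A, f x) /
        (kappa ((d:ℝ) - s) * r ^ ((d:ℝ) - s)))
      (𝓝[>] (0:ℝ)) (𝓝 (∫ x, f x ∂μ))

/-- Vague convergence, as `r ↓ 0`, of the rescaled surface measures
`σ_r^s(A,·) = H^{d-1}(∂A_r ∩ ·)/((d-s) κ_{d-s} r^{d-s-1})` to the Radon measure `μ`. -/
def vagueLimSurf {d : ℕ} (A : Set (Euc d)) (s : ℝ) (μ : Measure (Euc d)) : Prop :=
  ∀ f : Euc d → ℝ, Continuous f → HasCompactSupport f →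
    Filter.Tendsto
      (fun r : ℝ => (∫ x, f x ∂((Measure.hausdorffMeasure ((d:ℝ) - 1)).restrict
          (frontier (Metric.thickening r A)))) /
        (((d:ℝ) - s) * kappa ((d:ℝ) - s) * r ^ ((d:ℝ) - s - 1)))
      (𝓝[>] (0:ℝ)) (𝓝 (∫ x, f x ∂μ))

-- frontier locality
lemma frontier_inter_subset_of_inter_eq {X : Type*} [TopologicalSpace X] {S S' U : Set X}
    (hU : IsOpen U) (h : S ∩ U = S' ∩ U) : frontier S ∩ U ⊆ frontier S' := by
  intro x hx
  have h2 : ∀ y ∈ U, (y ∈ S ↔ y ∈ S') := fun y hy =>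
    ⟨fun h3 => (h.subset ⟨h3, hy⟩).1, fun h3 => (h.symm.subset ⟨h3, hy⟩).1⟩
  have h1 : U ∩ Sᶜ = U ∩ S'ᶜ := by
    ext y; simp only [mem_inter_iff, mem_compl_iff]
    exact and_congr_right fun hy => not_congr (h2 y hy)
  rw [frontier_eq_closure_inter_closure] at hx ⊢
  obtain ⟨⟨hc, hcc⟩, hxU⟩ := hx
  constructor
  · have : x ∈ U ∩ closure S := ⟨hxU, hc⟩
    have := hU.inter_closure this
    rw [inter_comm U S, h, inter_comm] at this
    exact closure_mono inter_subset_right this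
  · have : x ∈ U ∩ closure Sᶜ := ⟨hxU, hcc⟩
    have := hU.inter_closure this
    rw [h1] at this
    exact closure_mono inter_subset_right this

lemma thick_inter_sub {d : ℕ} {A A' B K : Set (Euc d)} (hAB : A ∩ B = A' ∩ B)
    {δ r : ℝ} (hδ : thickening δ K ⊆ B) (hrδ : r < δ/2) :
    thickening r A ∩ thickening (δ/2) K ⊆ thickening r A' ∩ thickening (δ/2) K := by
  rintro x ⟨hxA, hxK⟩
  refine ⟨?_, hxK⟩
  obtain ⟨a, haA, hax⟩ := mem_thickening_iff.mp hxA
  obtain ⟨k, hkK, hkx⟩ := mem_thickening_iff.mp hxK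
  have haB : a ∈ B := by
    apply hδ
    rw [mem_thickening_iff]
    exact ⟨k, hkK, (dist_triangle a x k).trans_lt (by rw [dist_comm a x]; linarith)⟩
  have : a ∈ A' := ((hAB ▸ (⟨haA, haB⟩ : a ∈ A ∩ B)) : a ∈ A' ∩ B).1
  exact mem_thickening_iff.mpr ⟨a, this, hax⟩

lemma compact_le {d : ℕ} {B : Set (Euc d)} (hB : IsOpen B)
    (μ μ' : Measure (Euc d)) [IsLocallyFiniteMeasure μ] [IsLocallyFiniteMeasure μ']
    (h : ∀ f : Euc d → ℝ, Continuous f → HasCompactSupport f → tsupport f ⊆ B →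
      ∫ x, f x ∂μ = ∫ x, f x ∂μ')
    {K : Set (Euc d)} (hK : IsCompact K) (hKB : K ⊆ B) : μ K ≤ μ' K := by
  rw [Set.measure_eq_iInf_isOpen K μ']
  refine le_iInf₂ fun U hKU => le_iInf fun hU => ?_
  obtain ⟨L, hL, hKL, hLUB⟩ := exists_compact_between hK (hU.inter hB) (subset_inter hKU hKB)
  obtain ⟨f, hf1, hf0, hfc, hficc⟩ := exists_continuous_one_zero_of_isCompact hK
    isOpen_interior.isClosed_compl (disjoint_compl_right_iff_subset.mpr hKL)
  have hsupp : tsupport (⇑f) ⊆ U ∩ B := by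
    have hsub : Function.support (⇑f) ⊆ interior L := fun x hx => by
      by_contra hx'; exact hx (hf0 hx')
    calc tsupport (⇑f) ⊆ closure (interior L) := closure_mono hsub
      _ ⊆ L := closure_minimal interior_subset hL.isClosed
      _ ⊆ U ∩ B := hLUB
  have hint : Integrable (⇑f) μ := f.continuous.integrable_of_hasCompactSupport hfc
  have hint' : Integrable (⇑f) μ' := f.continuous.integrable_of_hasCompactSupport hfc
  have key : μ K ≤ ENNReal.ofReal (∫ x, f x ∂μ) := by
    rw [← lintegral_indicator_one hK.measurableSet,
      ofReal_integral_eq_lintegral_ofReal hint (Eventually.of_forall fun x => (hficc x).1)]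
    refine lintegral_mono fun x => ?_
    by_cases hx : x ∈ K
    · simp [hx, hf1 hx]
    · simp [hx]
  have key2 : ENNReal.ofReal (∫ x, f x ∂μ') ≤ μ' U := by
    rw [← lintegral_indicator_one hU.measurableSet,
      ofReal_integral_eq_lintegral_ofReal hint' (Eventually.of_forall fun x => (hficc x).1)]
    refine lintegral_mono fun x => ?_
    by_cases hx : x ∈ U
    · simpa [hx] using ENNReal.ofReal_le_one.mpr (hficc x).2
    · have hfx : f x = 0 := by
        by_contra hfx
        exact hx (hsupp (subset_closure (by simpa [Function.mem_support] using hfx))).1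
      simp [hx, hfx]
  calc μ K ≤ ENNReal.ofReal (∫ x, f x ∂μ) := key
    _ = ENNReal.ofReal (∫ x, f x ∂μ') := by rw [h (⇑f) f.continuous hfc (hsupp.trans inter_subset_right)]
    _ ≤ μ' U := key2

lemma measure_eq_on_subsets {d : ℕ} {B : Set (Euc d)} (hB : IsOpen B)
    (μ μ' : Measure (Euc d)) [IsLocallyFiniteMeasure μ] [IsLocallyFiniteMeasure μ']
    (h : ∀ f : Euc d → ℝ, Continuous f → HasCompactSupport f → tsupport f ⊆ B →
      ∫ x, f x ∂μ = ∫ x, f x ∂μ')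
    {C : Set (Euc d)} (hCB : C ⊆ B) (hC : MeasurableSet C) : μ C = μ' C := by
  rw [hC.measure_eq_iSup_isCompact, hC.measure_eq_iSup_isCompact]
  refine iSup_congr fun K => iSup_congr fun hKC => iSup_congr fun hK => ?_
  exact le_antisymm (compact_le hB μ μ' h hK (hKC.trans hCB))
    (compact_le hB μ' μ (fun f hf hfc hsupp => (h f hf hfc hsupp).symm) hK (hKC.trans hCB))

lemma eventually_inter_eq {d : ℕ} {A A' B : Set (Euc d)} (hB : IsOpen B)
    (hAB : A ∩ B = A' ∩ B) {f : Euc d → ℝ} (hfc : HasCompactSupport f)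
    (hsupp : tsupport f ⊆ B) :
    ∀ᶠ r in 𝓝[>] (0:ℝ), ∃ U : Set (Euc d), IsOpen U ∧ Function.support f ⊆ U ∧
      thickening r A ∩ U = thickening r A' ∩ U := by
  obtain ⟨δ, hδ, hδB⟩ := hfc.exists_thickening_subset_open hB hsupp
  filter_upwards [Ioo_mem_nhdsGT_of_mem (⟨le_refl 0, half_pos hδ⟩ : (0:ℝ) ∈ Ico 0 (δ/2))]
    with r hr
  refine ⟨thickening (δ/2) (tsupport f), isOpen_thickening,
    subset_closure.trans (self_subset_thickening (half_pos hδ) _), ?_⟩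
  exact le_antisymm (thick_inter_sub hAB hδB hr.2) (thick_inter_sub hAB.symm hδB hr.2)

lemma vol_integral_eq {d : ℕ} {A A' B : Set (Euc d)} (hB : IsOpen B)
    (hAB : A ∩ B = A' ∩ B) {f : Euc d → ℝ} (hfc : HasCompactSupport f)
    (hsupp : tsupport f ⊆ B) :
    ∀ᶠ r in 𝓝[>] (0:ℝ),
      (∫ x in Metric.thickening r A, f x) = ∫ x in Metric.thickening r A', f x := by
  filter_upwards [eventually_inter_eq hB hAB hfc hsupp] with r hr
  obtain ⟨U, hU, hsU, hinter⟩ := hr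
  have hind : U.indicator f = f := indicator_eq_self.mpr hsU
  rw [← hind, setIntegral_indicator hU.measurableSet, setIntegral_indicator hU.measurableSet,
    hinter]

lemma surf_integral_eq {d : ℕ} {A A' B : Set (Euc d)} (hB : IsOpen B)
    (hAB : A ∩ B = A' ∩ B) {f : Euc d → ℝ} (hfc : HasCompactSupport f)
    (hsupp : tsupport f ⊆ B) :
    ∀ᶠ r in 𝓝[>] (0:ℝ),
      (∫ x, f x ∂((Measure.hausdorffMeasure ((d:ℝ) - 1) : Measure (Euc d)).restrict
          (frontier (Metric.thickening r A)))) =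
      ∫ x, f x ∂((Measure.hausdorffMeasure ((d:ℝ) - 1) : Measure (Euc d)).restrict
          (frontier (Metric.thickening r A'))) := by
  filter_upwards [eventually_inter_eq hB hAB hfc hsupp] with r hr
  obtain ⟨U, hU, hsU, hinter⟩ := hr
  have hfront : U ∩ frontier (thickening r A) = U ∩ frontier (thickening r A') := by
    rw [inter_comm U, inter_comm U]
    exact le_antisymm
      (subset_inter (frontier_inter_subset_of_inter_eq hU hinter) inter_subset_right)
      (subset_inter (frontier_inter_subset_of_inter_eq hU hinter.symm) inter_subset_right)
  have hind : U.indicator f = f := indicator_eq_self.mpr hsU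
  rw [← hind, integral_indicator hU.measurableSet, integral_indicator hU.measurableSet,
    Measure.restrict_restrict hU.measurableSet, Measure.restrict_restrict hU.measurableSet,
    hfront]

/-- Proposition 4.8: local Minkowski contents and local S-contents are locally
determined: if `A ∩ B = A' ∩ B` for an open set `B`, then the local contents of `A` and
`A'` (in case they exist) agree on all Borel subsets of `B`. -/
theorem local_contents_locally_determined {d : ℕ} (hd : 0 < d)
    (A A' B : Set (Euc d)) (hA : IsClosed A) (hA' : IsClosed A') (hB : IsOpen B)
    (hAB : A ∩ B = A' ∩ B) (s : ℝ) (hs0 : 0 ≤ s) (hsd : s < (d:ℝ)) :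
    (∀ μ μ' : Measure (Euc d), IsLocallyFiniteMeasure μ → IsLocallyFiniteMeasure μ' →
      vagueLimVol A s μ → vagueLimVol A' s μ' →
        ∀ C : Set (Euc d), C ⊆ B → MeasurableSet C → μ C = μ' C) ∧
    (∀ μ μ' : Measure (Euc d), IsLocallyFiniteMeasure μ → IsLocallyFiniteMeasure μ' →
      vagueLimSurf A s μ → vagueLimSurf A' s μ' →
        ∀ C : Set (Euc d), C ⊆ B → MeasurableSet C → μ C = μ' C) := by
  constructor
  · intro μ μ' hμ hμ' hv hv' C hCB hC
    haveI := hμ; haveI := hμ'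
    refine measure_eq_on_subsets hB μ μ' (fun f hf hfc hsupp => ?_) hCB hC
    have hEq : (fun r : ℝ => (∫ x in Metric.thickening r A, f x) /
          (kappa ((d:ℝ) - s) * r ^ ((d:ℝ) - s))) =ᶠ[𝓝[>] (0:ℝ)]
        (fun r : ℝ => (∫ x in Metric.thickening r A', f x) /
          (kappa ((d:ℝ) - s) * r ^ ((d:ℝ) - s))) := by
      filter_upwards [vol_integral_eq hB hAB hfc hsupp] with r hr
      rw [hr]
    exact tendsto_nhds_unique (hv f hf hfc) ((hv' f hf hfc).congr' hEq.symm)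
  · intro μ μ' hμ hμ' hv hv' C hCB hC
    haveI := hμ; haveI := hμ'
    refine measure_eq_on_subsets hB μ μ' (fun f hf hfc hsupp => ?_) hCB hC
    have hEq : (fun r : ℝ => (∫ x, f x ∂((Measure.hausdorffMeasure ((d:ℝ) - 1)).restrict
            (frontier (Metric.thickening r A)))) /
          (((d:ℝ) - s) * kappa ((d:ℝ) - s) * r ^ ((d:ℝ) - s - 1))) =ᶠ[𝓝[>] (0:ℝ)]
        (fun r : ℝ => (∫ x, f x ∂((Measure.hausdorffMeasure ((d:ℝ) - 1)).restrict
            (frontier (Metric.thickening r A')))) /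
          (((d:ℝ) - s) * kappa ((d:ℝ) - s) * r ^ ((d:ℝ) - s - 1))) := by
      filter_upwards [surf_integral_eq hB hAB hfc hsupp] with r hr
      rw [hr]
    exact tendsto_nhds_unique (hv f hf hfc) ((hv' f hf hfc).congr' hEq.symm)
end
end
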